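/- arXiv:1410.8327 — 2 statements merged into one kernel-verified Lean document; each statement's English description precedes it below -/
import Mathlib

section
/- For a qubit state ρ, the trace-norm coherence C_tr(ρ) = min_{δ incoherent} ‖ρ − δ‖_tr equals the l₁-norm coherence C_{l₁}(ρ) = Σ_{i≠j} |ρ_{ij}| = 2|ρ_{01}|. -/
open Matrix Complex ComplexOrder

noncomputable def matSqrt {n : Type*} [Fintype n] [DecidableEq n]
    (A : Matrix n n ℂ) : Matrix n n ℂ :=
  open Classical in
  if h : A.PosSemidef then (h.1.eigenvectorUnitary : Matrix n n ℂ) *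
    diagonal ((↑) ∘ (√·) ∘ h.1.eigenvalues) * (star h.1.eigenvectorUnitary : Matrix n n ℂ)
  else 0

noncomputable def fid {n : Type*} [Fintype n] [DecidableEq n]
    (ρ δ : Matrix n n ℂ) : ℝ :=
  ((matSqrt (matSqrt ρ * δ * matSqrt ρ)).trace).re ^ 2

noncomputable def traceNorm {n : Type*} [Fintype n] [DecidableEq n]
    (A : Matrix n n ℂ) : ℝ :=
  ((matSqrt (Aᴴ * A)).trace).re

def IsDensity {n : Type*} [Fintype n] [DecidableEq n] (ρ : Matrix n n ℂ) : Prop :=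
  ρ.PosSemidef ∧ ρ.trace = 1

noncomputable def qubit (rx ry rz : ℝ) : Matrix (Fin 2) (Fin 2) ℂ :=
  (1/2 : ℂ) • !![(1:ℂ) + rz, (rx : ℂ) - ry * I; (rx : ℂ) + ry * I, (1:ℂ) - rz]

lemma psd_diag_nonneg {n : Type*} [Fintype n] [DecidableEq n]
    {A : Matrix n n ℂ} (hA : A.PosSemidef) (i : n) : 0 ≤ A i i := by
  exact hA.diag_nonneg

lemma matSqrt_scalar (c : ℝ) (hc : 0 ≤ c) :
    matSqrt ((c : ℂ) • (1 : Matrix (Fin 2) (Fin 2) ℂ)) =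
      ((Real.sqrt c : ℝ) : ℂ) • 1 := by
  have hB : (((Real.sqrt c : ℝ) : ℂ) • (1 : Matrix (Fin 2) (Fin 2) ℂ)).PosSemidef := by
    have : (((Real.sqrt c : ℝ) : ℂ) • (1 : Matrix (Fin 2) (Fin 2) ℂ)) =
        Matrix.diagonal (fun _ => ((Real.sqrt c : ℝ) : ℂ)) := by
      ext i j
      simp [Matrix.diagonal, Matrix.one_apply]
    rw [this]
    exact Matrix.PosSemidef.diagonal fun i => by
      simp only [Pi.zero_apply]; exact Complex.zero_le_real.mpr (Real.sqrt_nonneg c)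
  have hsq : (((Real.sqrt c : ℝ) : ℂ) • (1 : Matrix (Fin 2) (Fin 2) ℂ)) ^ 2 =
      (c : ℂ) • 1 := by
    rw [smul_pow, one_pow]
    congr 1
    rw [← Complex.ofReal_pow, Real.sq_sqrt hc]
  have hA : ((c : ℂ) • (1 : Matrix (Fin 2) (Fin 2) ℂ)).PosSemidef := hsq ▸ hB.pow 2
  rw [matSqrt, dif_pos hA]
  have hev : ∀ i, hA.1.eigenvalues i = c := by
    intro i
    have h1 := hA.1.conjStarAlgAut_star_eigenvectorUnitary
    rw [Unitary.conjStarAlgAut_star_apply] at h1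
    have h2 := congrFun (congrFun h1 i) i
    simp at h2
    exact_mod_cast h2.symm
  have hd : diagonal ((↑) ∘ (√·) ∘ hA.1.eigenvalues) =
      ((Real.sqrt c : ℝ) : ℂ) • (1 : Matrix (Fin 2) (Fin 2) ℂ) := by
    ext i j
    simp [diagonal, one_apply, hev]
  rw [hd, Matrix.mul_smul, mul_one, Matrix.smul_mul, Unitary.mul_star_self_of_mem (Subtype.mem _)]

lemma traceNorm_herm (M : Matrix (Fin 2) (Fin 2) ℂ) (hM : M.IsHermitian)
    (ht : M.trace = 0) :
    traceNorm M = 2 * Real.sqrt ((M 0 0).re ^ 2 + ‖M 0 1‖ ^ 2) := by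
  set d : ℝ := (M 0 0).re with hd
  have h00 : M 0 0 = (d : ℂ) := (hM.coe_re_apply_self 0).symm
  have h11 : M 1 1 = -(d : ℂ) := by
    have := ht
    rw [Matrix.trace_fin_two, h00] at this
    linear_combination this
  have h10 : M 1 0 = starRingEnd ℂ (M 0 1) := (hM.apply 1 0).symm
  have hc : (0:ℝ) ≤ d ^ 2 + ‖M 0 1‖ ^ 2 := by positivity
  have hmul : Mᴴ * M = ((d ^ 2 + ‖M 0 1‖ ^ 2 : ℝ) : ℂ) • 1 := by
    rw [hM.eq]
    ext i j
    fin_cases i <;> fin_cases j <;>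
      simp [Matrix.mul_apply, Fin.sum_univ_two, h00, h11, h10, Matrix.one_apply,
        Complex.mul_conj, ← Complex.normSq_eq_conj_mul_self, Complex.sq_norm] <;> ring
  rw [traceNorm, hmul, matSqrt_scalar _ hc, Matrix.trace_smul, Matrix.trace_one]
  simp
  ring

/-- For any qubit density matrix, the trace-norm coherence equals the l₁-norm
coherence Σ_{i≠j} |ρ_{ij}| = 2|ρ₀₁|. -/
theorem traceNorm_coherence_eq_l1_qubit (ρ : Matrix (Fin 2) (Fin 2) ℂ)
    (hρ : IsDensity ρ) :
    IsLeast {t : ℝ | ∃ δ : Matrix (Fin 2) (Fin 2) ℂ,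
        IsDensity δ ∧ δ.IsDiag ∧ t = traceNorm (ρ - δ)}
      (∑ i : Fin 2, ∑ j : Fin 2, if i ≠ j then ‖ρ i j‖ else 0) ∧
    (∑ i : Fin 2, ∑ j : Fin 2, if i ≠ j then ‖ρ i j‖ else 0) =
      2 * ‖ρ 0 1‖ := by
  obtain ⟨hpsd, htr⟩ := hρ
  have hherm := hpsd.1
  have h10 : ρ 1 0 = starRingEnd ℂ (ρ 0 1) := (hherm.apply 1 0).symm
  have hsum : (∑ i : Fin 2, ∑ j : Fin 2, if i ≠ j then ‖ρ i j‖ else 0) =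
      2 * ‖ρ 0 1‖ := by
    simp [Fin.sum_univ_two, h10, Complex.norm_conj]
    ring
  refine ⟨⟨?_, ?_⟩, hsum⟩
  · -- membership: δ = diagonal part of ρ
    refine ⟨Matrix.diagonal (fun i => ρ i i), ⟨?_, ?_⟩, Matrix.isDiag_diagonal _, ?_⟩
    · exact Matrix.PosSemidef.diagonal fun i => by simpa using psd_diag_nonneg hpsd i
    · simpa [Matrix.trace_diagonal, Matrix.trace, Matrix.diag] using htr
    · set δ := Matrix.diagonal (fun i => ρ i i)
      have hδh : δ.IsHermitian := by
        refine Matrix.isHermitian_diagonal_iff.mpr fun i => ?_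
        exact hherm.apply i i
      have hMh : (ρ - δ).IsHermitian := hherm.sub hδh
      have hMt : (ρ - δ).trace = 0 := by
        rw [Matrix.trace_sub, htr]
        have : δ.trace = 1 := by simpa [δ, Matrix.trace_diagonal, Matrix.trace, Matrix.diag] using htr
        rw [this, sub_self]
      rw [traceNorm_herm _ hMh hMt, hsum]
      have e1 : (ρ - δ) 0 0 = 0 := by simp [δ, Matrix.diagonal]
      have e2 : (ρ - δ) 0 1 = ρ 0 1 := by simp [δ, Matrix.diagonal]
      rw [e1, e2]
      simp [Real.sqrt_sq_eq_abs]
  · -- lower bound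
    rintro t ⟨δ, ⟨hδpsd, hδtr⟩, hδdiag, rfl⟩
    have hδh := hδpsd.1
    have hMh : (ρ - δ).IsHermitian := hherm.sub hδh
    have hMt : (ρ - δ).trace = 0 := by
      rw [Matrix.trace_sub, htr, hδtr, sub_self]
    rw [traceNorm_herm _ hMh hMt, hsum]
    have e2 : (ρ - δ) 0 1 = ρ 0 1 := by
      have : δ 0 1 = 0 := hδdiag (by decide)
      simp [Matrix.sub_apply, this]
    rw [e2]
    have : ‖ρ 0 1‖ ≤
        Real.sqrt (((ρ - δ) 0 0).re ^ 2 + ‖ρ 0 1‖ ^ 2) := by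
      rw [show ‖ρ 0 1‖ = Real.sqrt (‖ρ 0 1‖ ^ 2) by
        rw [Real.sqrt_sq (norm_nonneg _)]]
      apply Real.sqrt_le_sqrt
      nlinarith [sq_nonneg (((ρ - δ) 0 0).re), Real.sq_sqrt (sq_nonneg (‖ρ 0 1‖))]
    linarith
end

section
/- For the qutrit X-state ρ_X (nonzero off-diagonal entries only at positions (1,3) and (3,1)), the trace-norm coherence equals the l₁-norm coherence: C_tr(ρ_X) = C_{l₁}(ρ_X) = 2|a_{13}|. -/
open Matrix Complex ComplexOrder

open MatrixOrder in
lemma matSqrt_eq_of_sq {n : Type*} [Fintype n] [DecidableEq n] {A S : Matrix n n ℂ}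
    (hA : A.PosSemidef) (hS : S.PosSemidef) (h : S ^ 2 = A) : matSqrt A = S := by
  have h1 : CFC.sqrt A = S := CFC.sqrt_unique (by rw [← sq]; exact h) hS.nonneg
  rw [← h1, CFC.sqrt_eq_cfc, cfc_nnreal_eq_real _ A, hA.1.cfc_eq, matSqrt, dif_pos hA]
  simp only [IsHermitian.cfc, Unitary.conjStarAlgAut_apply]
  have key : ∀ y : ℝ, (NNReal.sqrt y.toNNReal : ℝ) = √y := by
    intro y
    rw [Real.coe_sqrt, Real.coe_toNNReal']
    rcases le_total y 0 with h | h
    · rw [max_eq_right h, Real.sqrt_zero, Real.sqrt_eq_zero_of_nonpos h]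
    · rw [max_eq_left h]
  simp only [key]
  rfl

lemma two_abs_le_traceNorm {n : Type*} [Fintype n] [DecidableEq n]
    {A : Matrix n n ℂ} (hA : A.IsHermitian) {i j : n} (hij : i ≠ j) :
    2 * ‖A i j‖ ≤ traceNorm A := by
  set U : Matrix n n ℂ := (hA.eigenvectorUnitary : Matrix n n ℂ) with hUdef
  set lam := hA.eigenvalues with hlam
  have hU2 : star U * U = 1 := (Matrix.mem_unitaryGroup_iff').mp hA.eigenvectorUnitary.2
  have hspec : A = U * diagonal (fun k => ((lam k : ℝ) : ℂ)) * star U := hA.spectral_theorem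
  set S := U * diagonal (fun k => ((|lam k| : ℝ) : ℂ)) * star U with hSdef
  have hM : (Aᴴ * A).PosSemidef := Matrix.posSemidef_conjTranspose_mul_self A
  have key : ∀ d e : n → ℂ, (U * diagonal d * star U) * (U * diagonal e * star U)
      = U * (diagonal fun k => d k * e k) * star U := by
    intro d e
    simp only [Matrix.mul_assoc]
    rw [← Matrix.mul_assoc (star U) U, hU2, Matrix.one_mul,
      ← Matrix.mul_assoc (diagonal d), diagonal_mul_diagonal]
  have hSsq : S ^ 2 = Aᴴ * A := by
    rw [pow_two, hSdef, key, hA.eq]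
    conv_rhs => rw [hspec]
    rw [key]
    have : (fun k => ((|lam k| : ℝ) : ℂ) * ((|lam k| : ℝ) : ℂ))
        = fun k => ((lam k : ℝ) : ℂ) * ((lam k : ℝ) : ℂ) := by
      funext k
      norm_cast
      exact abs_mul_abs_self _
    rw [this]
  have hS_psd : S.PosSemidef := by
    have hd : (Matrix.diagonal (fun k => ((|lam k| : ℝ) : ℂ))).PosSemidef := by
      refine Matrix.PosSemidef.diagonal fun k => ?_
      simp [Complex.zero_le_real, abs_nonneg]
    simpa [hSdef, Matrix.star_eq_conjTranspose] using hd.mul_mul_conjTranspose_same U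
  have hsqrt : matSqrt (Aᴴ * A) = S := by
    exact matSqrt_eq_of_sq hM hS_psd hSsq
  have htrace : traceNorm A = ∑ k, |lam k| := by
    rw [traceNorm, hsqrt, hSdef, Matrix.trace_mul_cycle, hU2, Matrix.one_mul,
      Matrix.trace_diagonal]
    simp
  have hentry : A i j = ∑ k, U i k * ((lam k : ℝ) : ℂ) * (starRingEnd ℂ) (U j k) := by
    conv_lhs => rw [hspec]
    rw [Matrix.mul_apply]
    simp [Matrix.mul_diagonal, Matrix.star_apply, Complex.star_def]
  have hcol : ∀ k, (∑ l, Complex.normSq (U l k)) = 1 := by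
    intro k
    have h := congrFun (congrFun hU2 k) k
    rw [Matrix.mul_apply] at h
    simp only [Matrix.star_apply, Complex.star_def, Matrix.one_apply_eq] at h
    have : (((∑ l, Complex.normSq (U l k)) : ℝ) : ℂ) = 1 := by
      rw [← h]
      push_cast
      refine Finset.sum_congr rfl fun l _ => ?_
      rw [mul_comm, Complex.mul_conj]
    exact_mod_cast this
  have step1 : ‖A i j‖ ≤ ∑ k, |lam k| * (‖U i k‖ * ‖U j k‖) := by
    rw [hentry]
    refine (norm_sum_le _ _).trans_eq ?_
    refine Finset.sum_congr rfl fun k _ => ?_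
    simp [norm_mul, Complex.norm_conj, Complex.norm_real]
    ring
  have step2 : ∀ k, 2 * (|lam k| * (‖U i k‖ * ‖U j k‖))
      ≤ |lam k| * (Complex.normSq (U i k) + Complex.normSq (U j k)) := by
    intro k
    rw [← Complex.sq_norm, ← Complex.sq_norm]
    have h2 : 2 * (‖U i k‖ * ‖U j k‖)
        ≤ ‖U i k‖ ^ 2 + ‖U j k‖ ^ 2 := by
      nlinarith [sq_nonneg (‖U i k‖ - ‖U j k‖)]
    calc 2 * (|lam k| * (‖U i k‖ * ‖U j k‖))
        = |lam k| * (2 * (‖U i k‖ * ‖U j k‖)) := by ring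
      _ ≤ _ := by
          exact mul_le_mul_of_nonneg_left h2 (abs_nonneg _)
  have step3 : ∀ k, Complex.normSq (U i k) + Complex.normSq (U j k) ≤ 1 := by
    intro k
    rw [← hcol k]
    have hsub : ({i, j} : Finset n) ⊆ Finset.univ := Finset.subset_univ _
    have := Finset.sum_le_sum_of_subset_of_nonneg hsub
      (fun l _ _ => Complex.normSq_nonneg (U l k))
    rwa [Finset.sum_pair hij] at this
  calc 2 * ‖A i j‖
      ≤ 2 * ∑ k, |lam k| * (‖U i k‖ * ‖U j k‖) := by
        exact mul_le_mul_of_nonneg_left step1 (by norm_num)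
    _ = ∑ k, 2 * (|lam k| * (‖U i k‖ * ‖U j k‖)) := by
        rw [Finset.mul_sum]
    _ ≤ ∑ k, |lam k| * (Complex.normSq (U i k) + Complex.normSq (U j k)) :=
        Finset.sum_le_sum fun k _ => step2 k
    _ ≤ ∑ k, |lam k| * 1 :=
        Finset.sum_le_sum fun k _ =>
          mul_le_mul_of_nonneg_left (step3 k) (abs_nonneg _)
    _ = traceNorm A := by simp [htrace]


lemma sum_eq_aux (a11 a22 a33 : ℝ) (a13 : ℂ) :
    (∑ i : Fin 3, ∑ j : Fin 3, if i ≠ j then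
        ‖!![(a11 : ℂ), 0, a13; 0, (a22 : ℂ), 0;
          starRingEnd ℂ a13, 0, (a33 : ℂ)] i j‖ else 0) = 2 * ‖a13‖ := by
  simp [Fin.sum_univ_three, Complex.norm_conj]
  ring

/-- For the qutrit X-state, the trace-norm coherence equals the l₁-norm
coherence: C_tr(ρ_X) = C_{l₁}(ρ_X) = 2|a₁₃|. -/
theorem traceNorm_eq_l1_coherence_qutrit_X (a11 a22 a33 : ℝ) (a13 : ℂ)
    (hρ : IsDensity !![(a11 : ℂ), 0, a13; 0, (a22 : ℂ), 0; starRingEnd ℂ a13, 0, (a33 : ℂ)]) :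
    IsLeast {t : ℝ | ∃ δ : Matrix (Fin 3) (Fin 3) ℂ, IsDensity δ ∧ δ.IsDiag ∧
        t = traceNorm (!![(a11 : ℂ), 0, a13; 0, (a22 : ℂ), 0;
            starRingEnd ℂ a13, 0, (a33 : ℂ)] - δ)}
      (∑ i : Fin 3, ∑ j : Fin 3, if i ≠ j then
        ‖!![(a11 : ℂ), 0, a13; 0, (a22 : ℂ), 0;
          starRingEnd ℂ a13, 0, (a33 : ℂ)] i j‖ else 0) ∧
    (∑ i : Fin 3, ∑ j : Fin 3, if i ≠ j then
        ‖!![(a11 : ℂ), 0, a13; 0, (a22 : ℂ), 0;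
          starRingEnd ℂ a13, 0, (a33 : ℂ)] i j‖ else 0) = 2 * ‖a13‖ := by
  set ρM : Matrix (Fin 3) (Fin 3) ℂ :=
    !![(a11 : ℂ), 0, a13; 0, (a22 : ℂ), 0; starRingEnd ℂ a13, 0, (a33 : ℂ)] with hρM
  have hsum := sum_eq_aux a11 a22 a33 a13
  refine ⟨⟨?_, ?_⟩, hsum⟩
  · -- membership
    rw [hsum]
    set δ0 : Matrix (Fin 3) (Fin 3) ℂ := Matrix.diagonal ![(a11 : ℂ), a22, a33] with hδ0
    have hdiagnn : ∀ i : Fin 3, (0 : ℂ) ≤ ρM i i := by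
      intro i
      exact hρ.1.diag_nonneg
    have hδpsd : δ0.PosSemidef := by
      refine Matrix.PosSemidef.diagonal fun i => ?_
      fin_cases i
      · simpa [hρM] using hdiagnn 0
      · simpa [hρM] using hdiagnn 1
      · simpa [hρM] using hdiagnn 2
    have hδtr : δ0.trace = 1 := by
      have h := hρ.2
      rw [Matrix.trace] at h
      simp [Fin.sum_univ_three, Matrix.diag, hρM] at h
      rw [Matrix.trace_diagonal]
      simp [Fin.sum_univ_three]
      exact_mod_cast h
    have hA0 : ρM - δ0 = !![0, 0, a13; 0, 0, 0; starRingEnd ℂ a13, 0, 0] := by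
      ext i j
      fin_cases i <;> fin_cases j <;>
        simp [hρM, hδ0, Matrix.diagonal, Matrix.vecHead, Matrix.vecTail]
    set r := ‖a13‖ with hr
    set S0 : Matrix (Fin 3) (Fin 3) ℂ := Matrix.diagonal ![(r : ℂ), 0, (r : ℂ)] with hS0
    have hS0psd : S0.PosSemidef := by
      refine Matrix.PosSemidef.diagonal fun i => ?_
      fin_cases i <;> simp [Complex.zero_le_real, hr, norm_nonneg]
    have hMpsd : ((ρM - δ0)ᴴ * (ρM - δ0)).PosSemidef :=
      Matrix.posSemidef_conjTranspose_mul_self _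
    have hrr : ((r : ℝ) : ℂ) * r = ((Complex.normSq a13 : ℝ) : ℂ) := by
      norm_cast
      rw [hr, Complex.normSq_eq_norm_sq]
      ring
    have hc1 : a13 * (starRingEnd ℂ) a13 = ((Complex.normSq a13 : ℝ) : ℂ) :=
      Complex.mul_conj a13
    have hc2 : (starRingEnd ℂ) a13 * a13 = ((Complex.normSq a13 : ℝ) : ℂ) := by
      rw [mul_comm]; exact Complex.mul_conj a13
    have hS0sq : S0 ^ 2 = (ρM - δ0)ᴴ * (ρM - δ0) := by
      rw [hA0, pow_two]
      ext i j
      fin_cases i <;> fin_cases j <;>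
        simp [hS0, Matrix.mul_apply, Fin.sum_univ_three, Matrix.diagonal,
          Matrix.conjTranspose_apply, Matrix.vecHead, Matrix.vecTail, hc1, hc2, hrr]
    have hsqrt : matSqrt ((ρM - δ0)ᴴ * (ρM - δ0)) = S0 := by
      exact matSqrt_eq_of_sq hMpsd hS0psd hS0sq
    refine ⟨δ0, ⟨hδpsd, hδtr⟩, Matrix.isDiag_diagonal _, ?_⟩
    rw [traceNorm, hsqrt, hS0, Matrix.trace_diagonal]
    simp [Fin.sum_univ_three]
    ring
  · -- lower bound
    rintro t ⟨δ, hδ, hδdiag, rfl⟩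
    rw [hsum]
    have hherm : (ρM - δ).IsHermitian := hρ.1.1.sub hδ.1.1
    have hentry : (ρM - δ) 0 2 = a13 := by
      have h0 : δ 0 2 = 0 := hδdiag (by decide)
      simp [hρM, h0]
    have hfin := two_abs_le_traceNorm hherm (show (0 : Fin 3) ≠ 2 by decide)
    rwa [hentry] at hfin
end
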